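/- Assume n ≥ 1 and let χ̃ be the n×n 'Euclidean' character table of G, i.e., the matrix with entries χ̃^i_j = χ_i(g_j) for 1 ≤ i, j ≤ n (the character table with the row of the trivial character and the column of the identity class removed). Then χ̃ is invertible and its inverse has entries (χ̃^{-1})^i_j = (|C_i|/|G|)·( conj(χ_j(g_i)) − d_j ); equivalently, for all 1 ≤ i, j ≤ n, Σ_{k=1}^n χ_i(g_k)·(|C_k|/|G|)·( conj(χ_j(g_k)) − d_j ) = δ_{ij}. -/

import Mathlib

/-!
Let `X` be the full character table, `X i k = χ_i(g_k)`, and `B k j = |C_k|/|G| · conj χ_j(g_k)`.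
Row orthogonality of irreducible characters, together with `conj χ(g) = χ(g⁻¹)`, says exactly
that `X * B = 1`. As `g_0 = 1`, row `0` of `B` is `d_j / |G|`, proportional to the dimensions;
subtracting `d_j` times column `0` of `B` (which is `|C_k|/|G|`, by the trivial character) from
column `j` clears that row off the corner, after which the lower-right blocks of `X` and of the
modified `B` are inverse to each other.
-/

open CategoryTheory
open scoped Classical

/-- The size of the conjugacy class of `x`. -/
noncomputable def classCard {G : Type*} [Group G] (x : G) : ℕ :=
  Nat.card {y : G // IsConj x y}

open ComplexConjugate

namespace MonoidHom

open Matrix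
open scoped ComplexOrder

variable {G 𝕜 n : Type*} [Group G] [Fintype G] [RCLike 𝕜] [Fintype n] [DecidableEq n]

def invariantGram (ρ : G →* Matrix n n 𝕜) : Matrix n n 𝕜 :=
  ∑ h, (ρ h)ᴴ * ρ h

theorem posDef_invariantGram (ρ : G →* Matrix n n 𝕜) : ρ.invariantGram.PosDef :=
  posDef_sum Finset.univ_nonempty fun h _ =>
    .conjTranspose_mul_self _ (mulVec_injective_of_isUnit ((Group.isUnit h).map ρ))

theorem conjTranspose_mul_invariantGram_mul (ρ : G →* Matrix n n 𝕜) (g : G) :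
    (ρ g)ᴴ * ρ.invariantGram * ρ g = ρ.invariantGram := by
  simp only [invariantGram, Finset.mul_sum, Finset.sum_mul]
  refine Fintype.sum_equiv (Equiv.mulRight g) _ _ fun h => ?_
  simp only [Equiv.coe_mulRight, map_mul, conjTranspose_mul]
  noncomm_ring

/-- `ρ g` is unitary for the invariant Hermitian form `P = ρ.invariantGram`, so
`ρ g⁻¹ = P⁻¹ (ρ g)ᴴ P`. -/
theorem trace_apply_inv (ρ : G →* Matrix n n 𝕜) (g : G) :
    trace (ρ g⁻¹) = star (trace (ρ g)) := by
  have hconj : (ρ g)ᴴ * ρ.invariantGram = ρ.invariantGram * ρ g⁻¹ := by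
    nth_rw 2 [← ρ.conjTranspose_mul_invariantGram_mul g]
    rw [mul_assoc _ (ρ g), ← map_mul, mul_inv_cancel, map_one, mul_one]
  set P := ρ.invariantGram
  have hP : IsUnit P.det := (isUnit_iff_isUnit_det P).mp ρ.posDef_invariantGram.isUnit
  calc trace (ρ g⁻¹) = trace (P⁻¹ * (P * ρ g⁻¹)) := by
        rw [← mul_assoc, nonsing_inv_mul P hP, one_mul]
    _ = trace ((ρ g)ᴴ * P * P⁻¹) := by rw [← hconj, trace_mul_comm]
    _ = star (trace (ρ g)) := by
        rw [mul_assoc, mul_nonsing_inv P hP, mul_one, trace_conjTranspose]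

end MonoidHom

namespace FDRep

variable {G : Type*} [Group G]

theorem character_eq_of_isConj {k : Type*} [Field k] (V : FDRep k G) {x y : G}
    (h : IsConj x y) : V.character x = V.character y := by
  obtain ⟨c, rfl⟩ := isConj_iff.mp h
  exact (V.char_conj x c).symm

variable [Fintype G]

theorem conj_character (V : FDRep ℂ G) (g : G) : conj (V.character g) = V.character g⁻¹ := by
  let b := Module.finBasis ℂ V
  let ρ := (LinearMap.toMatrixAlgEquiv b).toMonoidHom.comp V.ρ
  have hχ : ∀ x, V.character x = (ρ x).trace := fun x => LinearMap.trace_eq_matrix_trace ℂ b _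
  rw [starRingEnd_apply, hχ, hχ, ρ.trace_apply_inv]

theorem sum_character_mul_conj_character (V W : FDRep ℂ G) [Simple V] [Simple W] :
    ∑ x, V.character x * conj (W.character x) =
      if Nonempty (V ≅ W) then (Fintype.card G : ℂ) else 0 := by
  have h := char_orthonormal V W
  have hG : (Nat.card G : ℂ) ≠ 0 := Nat.cast_ne_zero.mpr Nat.card_pos.ne'
  rw [inv_mul_eq_iff_eq_mul₀ hG, Nat.card_eq_fintype_card] at h
  simp only [conj_character, h]
  split_ifs <;> simp

end FDRep

theorem classCard_one (G : Type*) [Group G] : classCard (1 : G) = 1 := by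
  simp [classCard]

section ClassSums

variable {G ι : Type*} [Group G] [Fintype G] [Fintype ι]

theorem sum_eq_sum_classCard_smul {M : Type*} [AddCommMonoid M] (g : ι → G)
    (hg : ∀ x : G, ∃! k, IsConj (g k) x) {F : G → M}
    (hF : ∀ x y, IsConj x y → F x = F y) :
    ∑ x, F x = ∑ k, classCard (g k) • F (g k) := by
  choose cls hcls hcls_unique using hg
  have hfiber : ∀ k x, cls x = k ↔ IsConj (g k) x := fun k x =>
    ⟨fun h => h ▸ hcls x, fun h => (hcls_unique x k h).symm⟩
  rw [← Finset.sum_fiberwise Finset.univ cls F]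
  refine Fintype.sum_congr _ _ fun k => ?_
  rw [Finset.sum_congr rfl fun x hx =>
      (hF _ _ ((hfiber k x).1 (Finset.mem_filter.1 hx).2)).symm,
    Finset.sum_const, classCard, Nat.card_eq_fintype_card, Fintype.card_subtype]
  simp only [hfiber]

theorem sum_classCard_mul_character_mul_conj_character (g : ι → G)
    (hg : ∀ x : G, ∃! k, IsConj (g k) x) (V W : FDRep ℂ G) [Simple V] [Simple W] :
    ∑ k, (classCard (g k) : ℂ) * (V.character (g k) * conj (W.character (g k))) =
      if Nonempty (V ≅ W) then (Fintype.card G : ℂ) else 0 := by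
  rw [← FDRep.sum_character_mul_conj_character, sum_eq_sum_classCard_smul g hg]
  · simp only [nsmul_eq_mul]
  · intro x y hxy
    rw [V.character_eq_of_isConj hxy, W.character_eq_of_isConj hxy]

end ClassSums

/-- Subtracting `u j` times column `0` of `B` from column `j.succ` clears row `0` of `B` off the
corner, so the lower-right blocks of `X` and of the modified `B` are inverse to each other. -/
theorem Matrix.submatrix_succ_mul_eq_one {R : Type*} [CommRing R] {n : ℕ}
    {X B : Matrix (Fin (n + 1)) (Fin (n + 1)) R} (hXB : X * B = 1) (u : Fin n → R)
    (hB : ∀ j, B 0 j.succ = B 0 0 * u j) :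
    X.submatrix Fin.succ Fin.succ * Matrix.of (fun k j => B k.succ j.succ - B k.succ 0 * u j) =
      1 := by
  ext i j
  have h1 := congr_fun₂ hXB i.succ j.succ
  have h2 := congr_fun₂ hXB i.succ 0
  simp only [Matrix.mul_apply, Fin.sum_univ_succ, Matrix.one_apply, Fin.succ_inj,
    Fin.succ_ne_zero, if_false] at h1 h2 ⊢
  simp only [Matrix.submatrix_apply, Matrix.of_apply, mul_sub, Finset.sum_sub_distrib,
    ← mul_assoc, ← Finset.sum_mul]
  linear_combination h1 - u j * h2 - X i.succ 0 * hB j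

theorem stmt11_general {G : Type} [Group G] [Fintype G] {n : ℕ}
    (g : Fin (n + 1) → G) (hg1 : g 0 = 1)
    (hg : ∀ x : G, ∃! k : Fin (n + 1), IsConj (g k) x)
    (R : Fin (n + 1) → FDRep ℂ G)
    (hsimple : ∀ i, Simple (R i))
    (htriv : ∀ x : G, (R 0).character x = 1)
    (hdist : ∀ i j, i ≠ j → ¬ Nonempty (R i ≅ R j))
    -- `χt` : the Euclidean character table
    (χt : Matrix (Fin n) (Fin n) ℂ)
    (hχt : ∀ i j : Fin n, χt i j = (R i.succ).character (g j.succ))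
    -- `A` : the claimed inverse of `χt`
    (A : Matrix (Fin n) (Fin n) ℂ)
    (hA : ∀ i j : Fin n, A i j =
      (classCard (g i.succ) : ℂ) / (Fintype.card G : ℂ) *
        ((starRingEnd ℂ) ((R j.succ).character (g i.succ)) - (R j.succ).character 1)) :
    χt * A = 1 ∧ A * χt = 1 := by
  let X : Matrix (Fin (n + 1)) (Fin (n + 1)) ℂ := .of fun i k => (R i).character (g k)
  let B : Matrix (Fin (n + 1)) (Fin (n + 1)) ℂ := .of fun k j =>
    (classCard (g k) : ℂ) / Fintype.card G * conj ((R j).character (g k))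
  have hXB : X * B = 1 := by
    ext i j
    have hG : (Fintype.card G : ℂ) ≠ 0 := Nat.cast_ne_zero.mpr Fintype.card_ne_zero
    have hiso : Nonempty (R i ≅ R j) ↔ i = j :=
      ⟨fun h => by_contra fun hij => hdist i j hij h, fun h => h ▸ ⟨Iso.refl _⟩⟩
    have horth := sum_classCard_mul_character_mul_conj_character g hg (R i) (R j)
    simp only [hiso] at horth
    rw [Matrix.mul_apply, Matrix.one_apply, ← mul_div_cancel_right₀ (if i = j then (1 : ℂ) else 0) hG,
      ite_mul, one_mul, zero_mul, ← horth, Finset.sum_div]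
    refine Fintype.sum_congr _ _ fun k => ?_
    simp only [X, B, Matrix.of_apply]
    ring
  have hB0 : ∀ j : Fin n, B 0 j.succ = B 0 0 * (R j.succ).character 1 := by
    simp [B, hg1, htriv, classCard_one]
  have hA' : A = .of fun k j => B k.succ j.succ - B k.succ 0 * (R j.succ).character 1 := by
    ext k j
    simp only [hA, B, Matrix.of_apply, htriv, map_one]
    ring
  have key : χt * A = 1 := Matrix.ext hχt ▸ hA' ▸ Matrix.submatrix_succ_mul_eq_one hXB _ hB0
  exact ⟨key, mul_eq_one_comm.mp key⟩

theorem stmt11 {G : Type} [Group G] [Fintype G] {n : ℕ} (hn : 1 ≤ n)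
    (g : Fin (n + 1) → G) (hg1 : g 0 = 1)
    (hg : ∀ x : G, ∃! k : Fin (n + 1), IsConj (g k) x)
    (R : Fin (n + 1) → FDRep ℂ G)
    (hsimple : ∀ i, Simple (R i))
    (htriv : ∀ x : G, (R 0).character x = 1)
    (hdist : ∀ i j, i ≠ j → ¬ Nonempty (R i ≅ R j))
    -- `χt` : the Euclidean character table
    (χt : Matrix (Fin n) (Fin n) ℂ)
    (hχt : ∀ i j : Fin n, χt i j = (R i.succ).character (g j.succ))
    -- `A` : the claimed inverse of `χt`
    (A : Matrix (Fin n) (Fin n) ℂ)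
    (hA : ∀ i j : Fin n, A i j =
      (classCard (g i.succ) : ℂ) / (Fintype.card G : ℂ) *
        ((starRingEnd ℂ) ((R j.succ).character (g i.succ)) - (R j.succ).character 1)) :
    χt * A = 1 ∧ A * χt = 1 :=
  stmt11_general g hg1 hg R hsimple htriv hdist χt hχt A hA
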